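/- arXiv:2510.13492 — 3 statements merged into one kernel-verified Lean document; each statement's English description precedes it below -/
import Mathlib

section
/- Let g and p be complex polynomials and c₁, c₂ ∈ ℂ constants such that (g'(z)+p'(z))² + g''(z) + p''(z) = c₁ and (g'(z)−p'(z))² + g''(z) − p''(z) = c₂ for all z ∈ ℂ. Then deg g ≤ 1 and deg p ≤ 1. -/
open Polynomial

lemma aux_const (w : Polynomial ℂ) (c : ℂ)
    (h : w ^ 2 + Polynomial.derivative w = Polynomial.C c) : w.degree ≤ 0 := by
  by_contra hd
  push_neg at hd
  have hw : w ≠ 0 := fun h0 => by simp [h0] at hd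
  have hw2 : degree (Polynomial.derivative w) < degree (w ^ 2) := by
    calc degree (Polynomial.derivative w) < degree w := degree_derivative_lt hw
      _ ≤ degree (w ^ 2) := by
          rw [degree_pow]
          have := hd
          rcases (degree_eq_natDegree hw) with hh
          rw [hh] at *
          simp only [two_smul]
          exact_mod_cast le_add_of_nonneg_left (by exact_mod_cast Nat.zero_le _)
  have hdeg : degree (w ^ 2 + Polynomial.derivative w) = degree (w ^ 2) :=
    degree_add_eq_left_of_degree_lt hw2
  rw [h] at hdeg
  have h1 : degree (Polynomial.C c) ≤ 0 := degree_C_le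
  rw [hdeg, degree_pow] at h1
  have : (0 : WithBot ℕ) < 2 • degree w := by
    calc (0 : WithBot ℕ) < degree w := hd
      _ ≤ 2 • degree w := by
          rcases (degree_eq_natDegree hw) with hh
          rw [hh]; simp [two_smul]
          exact_mod_cast le_add_of_nonneg_left (by exact_mod_cast Nat.zero_le _)
  exact absurd h1 (not_le.mpr this)

lemma deriv_deg_le (g : Polynomial ℂ) (h : (Polynomial.derivative g).degree ≤ 0) :
    g.degree ≤ 1 := by
  by_contra hd
  push_neg at hd
  have hg : g ≠ 0 := fun h0 => by simp [h0] at hd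
  have hn : 2 ≤ g.natDegree := by
    by_contra hn; push_neg at hn
    exact absurd (degree_le_of_natDegree_le (n := 1) (by omega)) (not_le.mpr hd)
  rw [degree_derivative_eq g (by omega)] at h
  have h1 : (1 : WithBot ℕ) ≤ ((g.natDegree - 1 : ℕ) : WithBot ℕ) := by
    exact_mod_cast (by omega : 1 ≤ g.natDegree - 1)
  exact absurd h (not_le.mpr (lt_of_lt_of_le zero_lt_one h1))

theorem stmt_8 (g p : Polynomial ℂ) (c₁ c₂ : ℂ)
    (h1 : ∀ z : ℂ, (g.derivative.eval z + p.derivative.eval z) ^ 2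
        + g.derivative.derivative.eval z + p.derivative.derivative.eval z = c₁)
    (h2 : ∀ z : ℂ, (g.derivative.eval z - p.derivative.eval z) ^ 2
        + g.derivative.derivative.eval z - p.derivative.derivative.eval z = c₂) :
    g.degree ≤ 1 ∧ p.degree ≤ 1 := by
  set u := Polynomial.derivative g
  set v := Polynomial.derivative p
  have hw : (u + v) ^ 2 + Polynomial.derivative (u + v) = Polynomial.C c₁ := by
    apply Polynomial.funext
    intro z
    simp only [eval_add, eval_pow, eval_C, map_add]
    have := h1 z
    ring_nf
    ring_nf at this
    linear_combination this
  have hy : (u - v) ^ 2 + Polynomial.derivative (u - v) = Polynomial.C c₂ := by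
    apply Polynomial.funext
    intro z
    simp only [eval_sub, eval_add, eval_pow, eval_C, map_sub]
    have := h2 z
    linear_combination this
  have hwc := aux_const _ _ hw
  have hyc := aux_const _ _ hy
  have hu : u.degree ≤ 0 := by
    have h2 : u = (2⁻¹ : ℂ) • ((u + v) + (u - v)) := by
      have hq : (u + v) + (u - v) = (2 : ℂ) • u := by rw [two_smul]; ring
      rw [hq, smul_smul]; norm_num
    rw [h2]
    exact le_trans (degree_smul_le _ _) (le_trans (degree_add_le _ _) (max_le hwc hyc))
  have hv : v.degree ≤ 0 := by
    have h2 : v = (2⁻¹ : ℂ) • ((u + v) - (u - v)) := by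
      have hq : (u + v) - (u - v) = (2 : ℂ) • v := by rw [two_smul]; ring
      rw [hq, smul_smul]; norm_num
    rw [h2]
    exact le_trans (degree_smul_le _ _) (le_trans (degree_sub_le _ _) (max_le hwc hyc))
  exact ⟨deriv_deg_le g hu, deriv_deg_le p hv⟩
end

section
/- Let c ∈ ℂ be a nonzero constant and f(z) = −(√3/6)·e^{z² − cz}. Define L₁(f)(z) = −(2+√3)f(z) + (2−√3)f(z+c) and L₂(f)(z) = f(z) − f(z+c). Then for all z ∈ ℂ, (L₁(f)(z))² + 4·L₁(f)(z)·L₂(f)(z) + (L₂(f)(z))² = e^{2z²}. -/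
theorem stmt_17 (c : ℂ) (hc : c ≠ 0) (f : ℂ → ℂ)
    (hf : f = fun z => -(Real.sqrt 3 / 6 : ℂ) * Complex.exp (z ^ 2 - c * z)) :
    ∀ z : ℂ,
      (-(2 + (Real.sqrt 3 : ℂ)) * f z + (2 - (Real.sqrt 3 : ℂ)) * f (z + c)) ^ 2
        + 4 * (-(2 + (Real.sqrt 3 : ℂ)) * f z + (2 - (Real.sqrt 3 : ℂ)) * f (z + c))
            * (f z - f (z + c))
        + (f z - f (z + c)) ^ 2
      = Complex.exp (2 * z ^ 2) := by
  subst hf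
  intro z
  simp only
  set s : ℂ := (Real.sqrt 3 : ℂ) with hs
  have h3 : s ^ 2 = 3 := by
    rw [hs]
    norm_cast
    rw [Real.sq_sqrt] <;> norm_num
  set a : ℂ := Complex.exp (z ^ 2 - c * z) with ha
  set b : ℂ := Complex.exp ((z + c) ^ 2 - c * (z + c)) with hb
  have hab : a * b = Complex.exp (2 * z ^ 2) := by
    rw [ha, hb, ← Complex.exp_add]
    ring_nf
  rw [← hab]
  linear_combination (s ^ 2 * (a ^ 2 + b ^ 2) / 36 + (s ^ 2 + 6) * a * b / 18) * h3
end

section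
/- Let a ∈ ℂ with a² ≠ 1, let s₊, s₋ ∈ ℂ satisfy s₊² = 1 + a and s₋² = 1 − a, and let b : ℂ → ℂ be any entire function. Define f(z) = (1/√2)(cos(b(z))/s₊ + sin(b(z))/s₋) and g(z) = (1/√2)(cos(b(z))/s₊ − sin(b(z))/s₋). Then f(z)² + 2a·f(z)·g(z) + g(z)² = 1 for all z ∈ ℂ. -/
theorem stmt_19 (a sp sm : ℂ) (ha : a ^ 2 ≠ 1) (hp : sp ^ 2 = 1 + a) (hm : sm ^ 2 = 1 - a)
    (b : ℂ → ℂ) (hb : Differentiable ℂ b) (f g : ℂ → ℂ)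
    (hf : f = fun z => (1 / Real.sqrt 2 : ℂ) * (Complex.cos (b z) / sp + Complex.sin (b z) / sm))
    (hg : g = fun z => (1 / Real.sqrt 2 : ℂ) * (Complex.cos (b z) / sp - Complex.sin (b z) / sm)) :
    ∀ z : ℂ, f z ^ 2 + 2 * a * f z * g z + g z ^ 2 = 1 := by
  intro z
  have hsp : sp ≠ 0 := by
    intro h; apply ha; rw [h] at hp; simp at hp
    have : a = -1 := by linear_combination -hp
    rw [this]; ring
  have hsm : sm ≠ 0 := by
    intro h; apply ha; rw [h] at hm; simp at hm
    have : a = 1 := by linear_combination hm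
    rw [this]; ring
  have h2 : ((Real.sqrt 2 : ℝ) : ℂ) ^ 2 = 2 := by
    norm_cast
    exact Real.sq_sqrt (by norm_num)
  have e2 : (1 / ((Real.sqrt 2 : ℝ) : ℂ)) ^ 2 = 1 / 2 := by
    rw [div_pow, one_pow, h2]
  set c := Complex.cos (b z) with hc
  set s := Complex.sin (b z) with hs
  have hcs : s ^ 2 + c ^ 2 = 1 := Complex.sin_sq_add_cos_sq (b z)
  have ip : sp * sp⁻¹ = 1 := mul_inv_cancel₀ hsp
  have im : sm * sm⁻¹ = 1 := mul_inv_cancel₀ hsm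
  have H : f z ^ 2 + 2 * a * f z * g z + g z ^ 2
      = (1 / ((Real.sqrt 2 : ℝ) : ℂ)) ^ 2 *
        ((c * sp⁻¹ + s * sm⁻¹) ^ 2 + 2 * a * (c * sp⁻¹ + s * sm⁻¹) * (c * sp⁻¹ - s * sm⁻¹)
          + (c * sp⁻¹ - s * sm⁻¹) ^ 2) := by
    rw [hf, hg]; simp only [div_eq_mul_inv, one_mul]; ring
  rw [H, e2]
  linear_combination (-(c ^ 2 * sp⁻¹ ^ 2)) * hp + (-(s ^ 2 * sm⁻¹ ^ 2)) * hm
    + c ^ 2 * (sp * sp⁻¹ + 1) * ip + s ^ 2 * (sm * sm⁻¹ + 1) * im + hcs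
end
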